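/- arXiv:1609.02928 — 2 statements merged into one kernel-verified Lean document; each statement's English description precedes it below -/
import Mathlib

section
/- Let D₀ = {d¹, …, dᵐ} ⊆ ℝ² be a finite set of m directions that positively spans ℝ², i.e., { Σᵢ λᵢ dⁱ : λᵢ ≥ 0 for all i } = ℝ². Let X ⊆ ℝ² be a polytope with exactly n_v vertices (extreme points). Then there exists a finite set D ⊆ ℝ² with D₀ ⊆ D and |D| ≤ 3·n_v + (m - 3) such that D determines X within the class of all polytopes in ℝ² having exactly n_v extreme points. (Lemma on replacing the initialization set of Algorithm 1: when n̄ = n_v, at most (3n_v) + (m - 3) oracle calls suffice.) -/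
/-!
A vertex `v` of a polygon `X` is pinned down by two independent directions `a`, `b` of its normal
cone together with `a + b`: if a polytope `Y` has the same support values as `X` in these three
directions, then `a + b` exposes exactly the point `v` of `Y`, so `v` is a vertex of `Y`. Once every
vertex of `X` is pinned, a polytope `Y` with as many vertices as `X` has the same vertices, so
`Y = X`. This costs three directions per vertex, but directions of `D₀` can be reused: a vertex
whose normal cone meets `D₀ \ {0}` needs two new directions, one whose normal cone contains two
independent directions of `D₀` needs one. Since `D₀` positively spans the plane, these savings add
up to at least three as soon as `X` has two vertices; the only way they could fail is that `D₀`
touches just two normal cones, each along a line, and then `D₀` must contain opposite directions on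
both lines, which squeezes `X` to a point. A single point is determined by `D₀` alone.
-/

open RealInnerProductSpace

/-- Support function of a subset of `ℝⁿ`. -/
noncomputable def supp {n : ℕ} (X : Set (EuclideanSpace ℝ (Fin n)))
    (d : EuclideanSpace ℝ (Fin n)) : ℝ :=
  sSup ((fun v => ⟪v, d⟫) '' X)

/-- `X` is a polytope: the convex hull of a nonempty finite set. -/
def IsPolytope {n : ℕ} (X : Set (EuclideanSpace ℝ (Fin n))) : Prop :=
  ∃ F : Finset (EuclideanSpace ℝ (Fin n)), F.Nonempty ∧ X = convexHull ℝ (F : Set _)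

/-- The finite direction set `D` determines `X` within the class `𝒞`. -/
def Determines {n : ℕ} (𝒞 : Set (Set (EuclideanSpace ℝ (Fin n))))
    (D : Finset (EuclideanSpace ℝ (Fin n))) (X : Set (EuclideanSpace ℝ (Fin n))) : Prop :=
  ∀ Y ∈ 𝒞, (∀ d ∈ D, supp Y d = supp X d) → Y = X

open Set Module

section NormalCone

variable {E : Type*} [NormedAddCommGroup E] [InnerProductSpace ℝ E]

def normalCone (X : Set E) (v : E) : Set E := {d | ∀ x ∈ X, ⟪x, d⟫ ≤ ⟪v, d⟫}

lemma normalCone_convexHull (V : Set E) (v : E) :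
    normalCone (convexHull ℝ V) v = normalCone V v := by
  ext d
  refine ⟨fun h x hx => h x (subset_convexHull ℝ V hx), fun h => convexHull_min h ?_⟩
  exact convex_halfSpace_le (f := fun x => ⟪x, d⟫)
    ⟨fun x y => inner_add_left x y d, fun c x => by rw [real_inner_smul_left, smul_eq_mul]⟩ _

lemma sum_mem_normalCone {X : Set E} {v : E} {A : Finset E} (hA : (A : Set E) ⊆ normalCone X v) :
    ∑ a ∈ A, a ∈ normalCone X v := fun x hx => by
  simp only [inner_sum]
  exact Finset.sum_le_sum fun a ha => hA ha x hx

lemma Finset.exists_mem_normalCone {V : Finset E} (hV : V.Nonempty) (d : E) :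
    ∃ v ∈ V, d ∈ normalCone (V : Set E) v :=
  V.exists_max_image (fun x => ⟪x, d⟫) hV

lemma IsCompact.exists_mem_normalCone {X : Set E} (hX : IsCompact X) (hne : X.Nonempty) (d : E) :
    ∃ v ∈ X, d ∈ normalCone X v := by
  obtain ⟨v, hv, hmax⟩ :=
    hX.exists_isMaxOn hne (continuous_id.inner continuous_const).continuousOn (f := fun x => ⟪x, d⟫)
  exact ⟨v, hv, fun x hx => hmax hx⟩

lemma eq_zero_of_forall_inner_eq_zero_of_span_eq_top {S : Set E} (hS : Submodule.span ℝ S = ⊤)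
    {z : E} (h : ∀ a ∈ S, ⟪z, a⟫ = 0) : z = 0 := by
  have hle : Submodule.span ℝ S ≤ (ℝ ∙ z)ᗮ :=
    Submodule.span_le.2 fun a ha => Submodule.mem_orthogonal_singleton_iff_inner_right.2 (h a ha)
  rw [hS] at hle
  exact inner_self_eq_zero.1 (Submodule.mem_orthogonal_singleton_iff_inner_right.1 (hle trivial))

lemma eq_of_inner_sum_le {Y : Set E} {v y : E} {A : Finset E}
    (hA : Submodule.span ℝ (A : Set E) = ⊤) (hAN : (A : Set E) ⊆ normalCone Y v) (hy : y ∈ Y)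
    (h : ⟪v, ∑ a ∈ A, a⟫ ≤ ⟪y, ∑ a ∈ A, a⟫) : y = v := by
  have hle : ∀ a ∈ A, ⟪y, a⟫ - ⟪v, a⟫ ≤ 0 := fun a ha => sub_nonpos.2 (hAN ha y hy)
  have hsum : ∑ a ∈ A, (⟪y, a⟫ - ⟪v, a⟫) = 0 := by
    refine le_antisymm (Finset.sum_nonpos hle) ?_
    rw [Finset.sum_sub_distrib, ← inner_sum, ← inner_sum]
    linarith
  rw [← sub_eq_zero]
  refine eq_zero_of_forall_inner_eq_zero_of_span_eq_top hA fun a ha => ?_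
  rw [inner_sub_left]
  exact (Finset.sum_eq_zero_iff_of_nonpos hle).1 hsum a ha

lemma mem_extremePoints_of_unique_maximizer {Y : Set E} {v c : E} (hv : v ∈ Y)
    (hc : c ∈ normalCone Y v) (huniq : ∀ y ∈ Y, ⟪v, c⟫ ≤ ⟪y, c⟫ → y = v) : v ∈ extremePoints ℝ Y := by
  refine exposedPoints_subset_extremePoints ⟨hv, innerSL ℝ c, fun y hy => ?_⟩
  simp only [innerSL_apply_apply, real_inner_comm _ c]
  exact ⟨hc y hy, huniq y hy⟩

lemma exists_forall_inner_lt_of_mem_extremePoints [CompleteSpace E] {V : Finset E} {v : E}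
    (hv : v ∈ extremePoints ℝ (convexHull ℝ (V : Set E))) :
    ∃ e : E, ∀ x ∈ V, x ≠ v → ⟪x, e⟫ < ⟪v, e⟫ := by
  have hvK : v ∉ convexHull ℝ ((V : Set E) \ {v}) := fun h =>
    ((convex_convexHull ℝ _).mem_extremePoints_iff_mem_sdiff_convexHull_sdiff.1 hv).2
      (convexHull_mono (Set.sdiff_subset_sdiff_left (subset_convexHull ℝ _)) h)
  obtain ⟨f, u, hfv, hfK⟩ := geometric_hahn_banach_point_closed (convex_convexHull ℝ _)
    (V.finite_toSet.sdiff.isClosed_convexHull ℝ) hvK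
  refine ⟨-(InnerProductSpace.toDual ℝ E).symm f, fun x hx hxv => ?_⟩
  have hxK : x ∈ convexHull ℝ ((V : Set E) \ {v}) := subset_convexHull ℝ _ ⟨hx, hxv⟩
  simp only [inner_neg_right, real_inner_comm ((InnerProductSpace.toDual ℝ E).symm f),
    InnerProductSpace.toDual_symm_apply]
  linarith [hfK x hxK]

lemma isOpen_setOf_forall_inner_lt (V : Finset E) (v : E) :
    IsOpen {e : E | ∀ x ∈ V, x ≠ v → ⟪x, e⟫ < ⟪v, e⟫} := by
  simp only [ofPred_forall]
  refine isOpen_biInter_finset fun x _ => isOpen_iInter_of_finite fun _ => ?_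
  exact isOpen_lt (continuous_const.inner continuous_id) (continuous_const.inner continuous_id)

def PositivelySpans (D : Finset E) : Prop :=
  ∀ x : E, ∃ c : E → ℝ, (∀ d, 0 ≤ c d) ∧ x = ∑ d ∈ D, c d • d

lemma PositivelySpans.exists_inner_pos {D : Finset E} (hD : PositivelySpans D) {z : E}
    (hz : z ≠ 0) : ∃ d ∈ D, 0 < ⟪d, z⟫ := by
  obtain ⟨c, hc, hzc⟩ := hD z
  by_contra! h
  refine hz (real_inner_self_nonpos.1 ?_)
  nth_rewrite 1 [hzc]
  rw [sum_inner]
  exact Finset.sum_nonpos fun d hd => by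
    rw [real_inner_smul_left]
    exact mul_nonpos_of_nonneg_of_nonpos (hc d) (h d hd)

lemma PositivelySpans.exists_inner_mul_neg {D : Finset E} (hD : PositivelySpans D) {a z : E}
    (h : ⟪a, z⟫ ≠ 0) : ∃ d ∈ D, ⟪d, z⟫ * ⟪a, z⟫ < 0 := by
  have hz : z ≠ 0 := by
    rintro rfl
    simp at h
  obtain ⟨d, hd, hpos⟩ := hD.exists_inner_pos (smul_ne_zero (neg_ne_zero.2 h) hz)
  rw [real_inner_smul_right] at hpos
  exact ⟨d, hd, by linarith⟩

lemma PositivelySpans.eq_of_forall_inner_eq {D : Finset E} (hD : PositivelySpans D) {x y : E}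
    (h : ∀ d ∈ D, ⟪x, d⟫ = ⟪y, d⟫) : x = y := by
  by_contra hxy
  obtain ⟨d, hd, hpos⟩ := hD.exists_inner_pos (sub_ne_zero.2 hxy)
  rw [inner_sub_right, real_inner_comm, h d hd, real_inner_comm, sub_self] at hpos
  exact lt_irrefl _ hpos

lemma PositivelySpans.exists_ne_mem_normalCone {D V : Finset E} (hD : PositivelySpans D) {u v : E}
    (hu : u ∈ V) (huv : u ≠ v) :
    ∃ w ∈ V, w ≠ v ∧ ∃ d ∈ D, d ≠ 0 ∧ d ∈ normalCone (convexHull ℝ (V : Set E)) w := by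
  obtain ⟨d, hd, hpos⟩ := hD.exists_inner_pos (sub_ne_zero.2 huv)
  obtain ⟨w, hw, hwN⟩ := V.exists_mem_normalCone ⟨u, hu⟩ d
  refine ⟨w, hw, ?_, d, hd, ?_, by rwa [normalCone_convexHull]⟩
  · rintro rfl
    have := hwN u hu
    rw [inner_sub_right, real_inner_comm u, real_inner_comm w] at hpos
    linarith
  · rintro rfl
    simp at hpos

def Pins (D : Finset E) (X : Set E) (v : E) : Prop :=
  ∃ A ⊆ D, (A : Set E) ⊆ normalCone X v ∧ Submodule.span ℝ (A : Set E) = ⊤ ∧ ∑ a ∈ A, a ∈ D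

lemma Pins.mono {D D' : Finset E} {X : Set E} {v : E} (h : Pins D X v) (hD : D ⊆ D') :
    Pins D' X v := by
  obtain ⟨A, hAD, hAN, hA, hsum⟩ := h
  exact ⟨A, hAD.trans hD, hAN, hA, hD hsum⟩

end NormalCone

section Polytope

variable {n : ℕ} {X Y : Set (EuclideanSpace ℝ (Fin n))}

lemma IsPolytope.isCompact (hX : IsPolytope X) : IsCompact X := by
  obtain ⟨F, -, rfl⟩ := hX
  exact F.finite_toSet.isCompact_convexHull ℝ

lemma IsPolytope.nonempty (hX : IsPolytope X) : X.Nonempty := by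
  obtain ⟨F, hF, rfl⟩ := hX
  exact convexHull_nonempty_iff.2 (Finset.coe_nonempty.2 hF)

lemma IsPolytope.finite_extremePoints (hX : IsPolytope X) : (extremePoints ℝ X).Finite := by
  obtain ⟨F, -, rfl⟩ := hX
  exact F.finite_toSet.subset extremePoints_convexHull_subset

lemma IsPolytope.convexHull_extremePoints (hX : IsPolytope X) :
    convexHull ℝ (extremePoints ℝ X) = X := by
  have hconv : Convex ℝ X := by
    obtain ⟨F, -, rfl⟩ := hX
    exact convex_convexHull ℝ _
  have := closure_convexHull_extremePoints hX.isCompact hconv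
  rwa [(hX.finite_extremePoints.isClosed_convexHull ℝ).closure_eq] at this

lemma IsPolytope.exists_eq_singleton (hX : IsPolytope X) (h1 : (extremePoints ℝ X).ncard = 1) :
    ∃ x, X = {x} := by
  obtain ⟨x, hx⟩ := Set.ncard_eq_one.1 h1
  exact ⟨x, by rw [← hX.convexHull_extremePoints, hx, convexHull_singleton]⟩

lemma supp_singleton (x d : EuclideanSpace ℝ (Fin n)) : supp {x} d = ⟪x, d⟫ := by
  simp [supp]

lemma supp_eq_of_mem_normalCone {v d : EuclideanSpace ℝ (Fin n)} (hv : v ∈ X)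
    (hd : d ∈ normalCone X v) : supp X d = ⟪v, d⟫ :=
  IsGreatest.csSup_eq (⟨⟨v, hv, rfl⟩, by rintro _ ⟨x, hx, rfl⟩; exact hd x hx⟩ :
    IsGreatest ((fun x => ⟪x, d⟫) '' X) ⟪v, d⟫)

lemma mem_normalCone_of_supp_le {v d : EuclideanSpace ℝ (Fin n)} (hX : IsCompact X)
    (h : supp X d ≤ ⟪v, d⟫) : d ∈ normalCone X v := fun _ hx =>
  (le_csSup (hX.image (continuous_id.inner continuous_const)).bddAbove
    (mem_image_of_mem _ hx)).trans h

lemma Pins.mem_extremePoints {D : Finset (EuclideanSpace ℝ (Fin n))} {v : EuclideanSpace ℝ (Fin n)}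
    (hP : Pins D X v) (hv : v ∈ X) (hY : IsPolytope Y) (hXY : ∀ d ∈ D, supp Y d = supp X d) :
    v ∈ extremePoints ℝ Y := by
  obtain ⟨A, hAD, hAN, hA, hsum⟩ := hP
  have htransfer : ∀ d ∈ D, d ∈ normalCone X v → d ∈ normalCone Y v := fun d hd hdN =>
    mem_normalCone_of_supp_le hY.isCompact (by rw [hXY d hd, supp_eq_of_mem_normalCone hv hdN])
  have huniq : ∀ y ∈ Y, ⟪v, ∑ a ∈ A, a⟫ ≤ ⟪y, ∑ a ∈ A, a⟫ → y = v :=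
    fun y hy => eq_of_inner_sum_le hA (fun a ha => htransfer a (hAD ha) (hAN ha)) hy
  obtain ⟨w, hw, hwN⟩ := hY.isCompact.exists_mem_normalCone hY.nonempty (∑ a ∈ A, a)
  have hwv : w = v := huniq w hw (by
    rw [← supp_eq_of_mem_normalCone hv (sum_mem_normalCone hAN), ← hXY _ hsum,
      supp_eq_of_mem_normalCone hw hwN])
  exact mem_extremePoints_of_unique_maximizer (hwv ▸ hw)
    (htransfer _ hsum (sum_mem_normalCone hAN)) huniq

lemma determines_of_forall_pins {D : Finset (EuclideanSpace ℝ (Fin n))} (hX : IsPolytope X)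
    (hD : ∀ v ∈ extremePoints ℝ X, Pins D X v) :
    Determines {Y | IsPolytope Y ∧ (extremePoints ℝ Y).ncard = (extremePoints ℝ X).ncard} D X := by
  rintro Y ⟨hY, hcard⟩ hXY
  have hsub : extremePoints ℝ X ⊆ extremePoints ℝ Y := fun v hv =>
    (hD v hv).mem_extremePoints (extremePoints_subset hv) hY hXY
  rw [← hY.convexHull_extremePoints, ← hX.convexHull_extremePoints,
    Set.eq_of_subset_of_ncard_le hsub hcard.le hY.finite_extremePoints]

lemma PositivelySpans.determines_of_ncard_extremePoints_eq_one
    {D : Finset (EuclideanSpace ℝ (Fin n))} (hD : PositivelySpans D) (hX : IsPolytope X)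
    (h1 : (extremePoints ℝ X).ncard = 1) :
    Determines {Y | IsPolytope Y ∧ (extremePoints ℝ Y).ncard = 1} D X := by
  rintro Y ⟨hY, hY1⟩ hXY
  obtain ⟨x, rfl⟩ := hX.exists_eq_singleton h1
  obtain ⟨y, rfl⟩ := hY.exists_eq_singleton hY1
  exact Set.singleton_eq_singleton_iff.2
    (hD.eq_of_forall_inner_eq fun d hd => by simpa only [supp_singleton] using hXY d hd)

end Polytope

section Plane

open Filter Topology

attribute [local instance] FiniteDimensional.of_fact_finrank_eq_two

variable {E : Type*} [NormedAddCommGroup E] [InnerProductSpace ℝ E] [Fact (finrank ℝ E = 2)]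

open Classical in
/-- How many of the directions of a pinning certificate at `v` the set `D₀` already supplies:
one if the normal cone at `v` contains a nonzero direction of `D₀`, and one more if it contains
two independent ones. -/
noncomputable def numReused (o : Orientation ℝ E (Fin 2)) (D₀ : Finset E) (X : Set E) (v : E) :
    ℕ :=
  (if ∃ d ∈ D₀, d ≠ 0 ∧ d ∈ normalCone X v then 1 else 0) +
    (if ∃ d ∈ D₀, ∃ d' ∈ D₀, d ∈ normalCone X v ∧ d' ∈ normalCone X v ∧ o.areaForm d d' ≠ 0
      then 1 else 0)

variable {o : Orientation ℝ E (Fin 2)}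

local notation "ω" => o.areaForm
local notation "J" => o.rightAngleRotation

lemma eq_zero_of_inner_eq_zero_of_areaForm_ne_zero {a b z : E} (hab : ω a b ≠ 0)
    (ha : ⟪a, z⟫ = 0) (hb : ⟪b, z⟫ = 0) : z = 0 := by
  have h := o.inner_mul_areaForm_sub z a b
  rw [real_inner_comm, ha, real_inner_comm, hb, zero_mul, mul_zero, sub_zero] at h
  simpa [hab] using h.symm

lemma span_pair_eq_top_of_areaForm_ne_zero {a b : E} (hab : ω a b ≠ 0) :
    Submodule.span ℝ {a, b} = ⊤ := by
  rw [← Submodule.orthogonal_eq_bot_iff, Submodule.eq_bot_iff]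
  intro z hz
  rw [Submodule.mem_orthogonal] at hz
  exact eq_zero_of_inner_eq_zero_of_areaForm_ne_zero hab
    (hz a (Submodule.subset_span (by simp))) (hz b (Submodule.subset_span (by simp)))

lemma pins_of_areaForm_ne_zero {D : Finset E} {X : Set E} {v a b : E}
    (ha : a ∈ normalCone X v) (hb : b ∈ normalCone X v) (hab : ω a b ≠ 0)
    (haD : a ∈ D) (hbD : b ∈ D) (habD : a + b ∈ D) : Pins D X v := by
  classical
  have hne : a ≠ b := by
    rintro rfl
    exact hab (o.areaForm_apply_self a)
  refine ⟨{a, b}, ?_, ?_, ?_, ?_⟩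
  · simp [Finset.insert_subset_iff, haD, hbD]
  · simp [Set.insert_subset_iff, ha, hb]
  · simpa using span_pair_eq_top_of_areaForm_ne_zero hab
  · rwa [Finset.sum_pair hne]

lemma exists_mem_areaForm_ne_zero_of_isOpen {U : Set E} (hU : IsOpen U) {d e : E} (he : e ∈ U)
    (hd : d ≠ 0) : ∃ b ∈ U, ω d b ≠ 0 := by
  by_cases hde : ω d e = 0
  swap
  · exact ⟨e, he, hde⟩
  have hline : ∀ᶠ t in 𝓝[≠] (0 : ℝ), e + t • J d ∈ U := by
    refine nhdsWithin_le_nhds ((Continuous.continuousAt ?_).preimage_mem_nhds ?_)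
    · fun_prop
    · simpa using hU.mem_nhds he
  obtain ⟨t, ht, ht0⟩ := (hline.and self_mem_nhdsWithin).exists
  have ht0 : t ≠ 0 := ht0
  refine ⟨_, ht, ?_⟩
  simp [hde, o.areaForm_rightAngleRotation_right, ht0, hd]

lemma exists_mem_normalCone_areaForm_ne_zero {V : Finset E} {v d : E}
    (hv : v ∈ extremePoints ℝ (convexHull ℝ (V : Set E))) (hd : d ≠ 0) :
    ∃ b ∈ normalCone (convexHull ℝ (V : Set E)) v, ω d b ≠ 0 := by
  obtain ⟨e, he⟩ := exists_forall_inner_lt_of_mem_extremePoints hv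
  obtain ⟨b, hb, hdb⟩ :=
    exists_mem_areaForm_ne_zero_of_isOpen (isOpen_setOf_forall_inner_lt V v) he hd
  refine ⟨b, ?_, hdb⟩
  rw [normalCone_convexHull]
  intro x hx
  rcases eq_or_ne x v with rfl | hxv
  · exact le_rfl
  · exact (hb x hx hxv).le

lemma exists_pins_card_add_numReused_le [DecidableEq E] {D₀ V : Finset E} {v : E}
    (hv : v ∈ extremePoints ℝ (convexHull ℝ (V : Set E))) :
    ∃ T : Finset E, T.card + numReused o D₀ (convexHull ℝ (V : Set E)) v ≤ 3 ∧
      Pins (D₀ ∪ T) (convexHull ℝ (V : Set E)) v := by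
  set X := convexHull ℝ (V : Set E)
  by_cases hpair : ∃ d ∈ D₀, ∃ d' ∈ D₀, d ∈ normalCone X v ∧ d' ∈ normalCone X v ∧ ω d d' ≠ 0
  · obtain ⟨d, hd, d', hd', hdN, hd'N, hdd'⟩ := hpair
    refine ⟨{d + d'}, ?_, pins_of_areaForm_ne_zero hdN hd'N hdd' (by simp [hd]) (by simp [hd'])
      (by simp)⟩
    have : numReused o D₀ X v ≤ 2 := by
      unfold numReused
      split_ifs <;> norm_num
    simp only [Finset.card_singleton]
    omega
  by_cases hdir : ∃ d ∈ D₀, d ≠ 0 ∧ d ∈ normalCone X v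
  · obtain ⟨d, hd, hd0, hdN⟩ := hdir
    obtain ⟨b, hbN, hdb⟩ := exists_mem_normalCone_areaForm_ne_zero (o := o) hv hd0
    refine ⟨{b, d + b}, ?_, pins_of_areaForm_ne_zero hdN hbN hdb (by simp [hd]) (by simp)
      (by simp)⟩
    have : ({b, d + b} : Finset E).card ≤ 2 := Finset.card_le_two
    simp only [numReused, if_neg hpair]
    split_ifs <;> omega
  · have : Nontrivial E := Module.nontrivial_of_finrank_eq_succ (Fact.out : finrank ℝ E = 2)
    obtain ⟨x₀, hx₀⟩ := exists_ne (0 : E)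
    obtain ⟨a, haN, hx₀a⟩ := exists_mem_normalCone_areaForm_ne_zero (o := o) hv hx₀
    have ha0 : a ≠ 0 := by
      rintro rfl
      simp at hx₀a
    obtain ⟨b, hbN, hab⟩ := exists_mem_normalCone_areaForm_ne_zero (o := o) hv ha0
    refine ⟨{a, b, a + b}, ?_, pins_of_areaForm_ne_zero haN hbN hab (by simp) (by simp) (by simp)⟩
    simp only [numReused, if_neg hpair, if_neg hdir]
    exact Finset.card_le_three

lemma PositivelySpans.exists_areaForm_pos {D : Finset E} (hD : PositivelySpans D) {a : E}
    (ha : a ≠ 0) : ∃ d ∈ D, 0 < ω a d := by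
  obtain ⟨d, hd, hpos⟩ := hD.exists_inner_pos (z := J a) (by simpa using ha)
  rw [o.inner_rightAngleRotation_right, o.areaForm_swap, neg_neg] at hpos
  exact ⟨d, hd, hpos⟩

lemma inner_eq_of_forall_areaForm_eq_zero {D : Finset E} (hD : PositivelySpans D) {X : Set E}
    {v w a z : E} (hw : w ∈ X) (ha : a ∈ normalCone X v) (haz : ⟪a, z⟫ ≠ 0)
    (hcover : ∀ d ∈ D, d ≠ 0 → d ∈ normalCone X v ∨ d ∈ normalCone X w)
    (hv : ∀ d ∈ D, d ∈ normalCone X v → ω a d = 0)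
    (hwz : ∀ d ∈ D, d ∈ normalCone X w → ⟪d, z⟫ = 0) : ⟪w, a⟫ = ⟪v, a⟫ := by
  obtain ⟨d, hdD, hd⟩ := hD.exists_inner_mul_neg haz
  have hd0 : d ≠ 0 := by
    rintro rfl
    simp at hd
  have hdN : d ∈ normalCone X v := (hcover d hdD hd0).resolve_right fun hdw => by
    simp [hwz d hdD hdw] at hd
  have ha0 : 0 < ‖a‖ ^ 2 := by
    have : a ≠ 0 := by
      rintro rfl
      simp at haz
    positivity
  -- `ω a d = 0` makes `d` a multiple of `a`, and `hd` forces the multiple to be negative.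
  have hz := o.inner_mul_inner_add_areaForm_mul_areaForm a d z
  have hwv := o.inner_mul_inner_add_areaForm_mul_areaForm a d (w - v)
  rw [hv d hdD hdN, zero_mul, add_zero] at hz hwv
  rw [inner_sub_right, inner_sub_right] at hwv
  have hda : ⟪a, d⟫ < 0 := by
    by_contra! h
    nlinarith [congrArg (· * ⟪a, z⟫) hz, mul_nonneg h (sq_nonneg ⟪a, z⟫)]
  have h1 := ha w hw
  have h2 := hdN w hw
  rw [real_inner_comm w, real_inner_comm v, real_inner_comm w, real_inner_comm v] at hwv
  nlinarith

lemma PositivelySpans.eq_of_forall_mem_normalCone_or {D : Finset E} (hD : PositivelySpans D)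
    {X : Set E} {v w a : E} (hv : v ∈ X) (hw : w ∈ X) (haD : a ∈ D) (ha0 : a ≠ 0)
    (haN : a ∈ normalCone X v)
    (hcover : ∀ d ∈ D, d ≠ 0 → d ∈ normalCone X v ∨ d ∈ normalCone X w)
    (hvpar : ∀ d ∈ D, ∀ d' ∈ D, d ∈ normalCone X v → d' ∈ normalCone X v → ω d d' = 0)
    (hwpar : ∀ d ∈ D, ∀ d' ∈ D, d ∈ normalCone X w → d' ∈ normalCone X w → ω d d' = 0) :
    v = w := by
  obtain ⟨b, hbD, hab⟩ := hD.exists_areaForm_pos (o := o) ha0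
  have hb0 : b ≠ 0 := by
    rintro rfl
    simp at hab
  have hbN : b ∈ normalCone X w := (hcover b hbD hb0).resolve_left fun hbv =>
    hab.ne' (hvpar a haD b hbD haN hbv)
  have hwa : ⟪w, a⟫ = ⟪v, a⟫ := inner_eq_of_forall_areaForm_eq_zero hD hw haN (z := J b)
    (by rw [o.inner_rightAngleRotation_right]; linarith) hcover
    (fun d hd hdN => hvpar a haD d hd haN hdN)
    (fun d hd hdN => by rw [o.inner_rightAngleRotation_right, hwpar d hd b hbD hdN hbN, neg_zero])
  have hvb : ⟪v, b⟫ = ⟪w, b⟫ := inner_eq_of_forall_areaForm_eq_zero hD hv hbN (z := J a)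
    (by rw [o.inner_rightAngleRotation_right, o.areaForm_swap, neg_neg]; exact hab.ne')
    (fun d hd hd0 => (hcover d hd hd0).symm)
    (fun d hd hdN => hwpar b hbD d hd hbN hdN)
    (fun d hd hdN => by rw [o.inner_rightAngleRotation_right, hvpar d hd a haD hdN haN, neg_zero])
  refine (sub_eq_zero.1 (eq_zero_of_inner_eq_zero_of_areaForm_ne_zero hab.ne' ?_ ?_)).symm
  · rw [inner_sub_right, real_inner_comm w, real_inner_comm v, hwa, sub_self]
  · rw [inner_sub_right, real_inner_comm w, real_inner_comm v, hvb, sub_self]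

lemma three_le_sum_numReused {D₀ V : Finset E} (hD : PositivelySpans D₀) (hV : 2 ≤ V.card) :
    3 ≤ ∑ v ∈ V, numReused o D₀ (convexHull ℝ (V : Set E)) v := by
  classical
  set X := convexHull ℝ (V : Set E)
  set P := V.filter fun v => ∃ d ∈ D₀, d ≠ 0 ∧ d ∈ normalCone X v
  set Q := V.filter fun v =>
    ∃ d ∈ D₀, ∃ d' ∈ D₀, d ∈ normalCone X v ∧ d' ∈ normalCone X v ∧ ω d d' ≠ 0
  have hsum : ∑ v ∈ V, numReused o D₀ X v = P.card + Q.card := by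
    simp only [numReused, Finset.sum_add_distrib, Finset.card_filter, P, Q]
  have hP : ∀ v ∈ V, ∃ w ∈ P, w ≠ v := fun v hv => by
    obtain ⟨u, hu, huv⟩ := V.exists_mem_ne (by omega) v
    obtain ⟨w, hw, hwv, hdir⟩ := hD.exists_ne_mem_normalCone hu huv
    exact ⟨w, Finset.mem_filter.2 ⟨hw, hdir⟩, hwv⟩
  obtain ⟨v₀, hv₀⟩ : V.Nonempty := Finset.card_pos.1 (by omega)
  obtain ⟨w₁, hw₁, -⟩ := hP v₀ hv₀
  obtain ⟨w₂, hw₂, hw₂₁⟩ := hP w₁ (Finset.mem_filter.1 hw₁).1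
  rw [hsum]
  by_contra! hlt
  have hP2 : ({w₁, w₂} : Finset E).card ≤ P.card :=
    Finset.card_le_card (by simp [Finset.insert_subset_iff, hw₁, hw₂])
  rw [Finset.card_pair hw₂₁.symm] at hP2
  have hcover : ∀ d ∈ D₀, d ≠ 0 → d ∈ normalCone X w₁ ∨ d ∈ normalCone X w₂ := by
    intro d hd hd0
    obtain ⟨u, hu, huN⟩ := V.exists_mem_normalCone ⟨v₀, hv₀⟩ d
    rw [← normalCone_convexHull] at huN
    by_contra! h
    have hne₁ : u ≠ w₁ := by rintro rfl; exact h.1 huN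
    have hne₂ : u ≠ w₂ := by rintro rfl; exact h.2 huN
    have h3 : ({u, w₁, w₂} : Finset E).card ≤ P.card := Finset.card_le_card (by
      simp [Finset.insert_subset_iff, hw₁, hw₂, P, hu]
      exact ⟨d, hd, hd0, huN⟩)
    rw [Finset.card_insert_of_notMem (by simp [hne₁, hne₂]), Finset.card_pair hw₂₁.symm] at h3
    omega
  have hpar : ∀ w ∈ V, ∀ d ∈ D₀, ∀ d' ∈ D₀, d ∈ normalCone X w → d' ∈ normalCone X w →
      ω d d' = 0 := by
    intro w hw d hd d' hd' hdN hd'N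
    by_contra h
    have : 0 < Q.card :=
      Finset.card_pos.2 ⟨w, Finset.mem_filter.2 ⟨hw, d, hd, d', hd', hdN, hd'N, h⟩⟩
    omega
  have hw₁V := (Finset.mem_filter.1 hw₁).1
  obtain ⟨a, haD, ha0, haN⟩ := (Finset.mem_filter.1 hw₁).2
  exact hw₂₁ (hD.eq_of_forall_mem_normalCone_or (subset_convexHull ℝ _ hw₁V)
    (subset_convexHull ℝ _ (Finset.mem_filter.1 hw₂).1) haD ha0 haN hcover (hpar w₁ hw₁V)
    (hpar w₂ (Finset.mem_filter.1 hw₂).1)).symm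

lemma PositivelySpans.three_le_card {D : Finset E} (hD : PositivelySpans D) : 3 ≤ D.card := by
  have : Nontrivial E := Module.nontrivial_of_finrank_eq_succ (Fact.out : finrank ℝ E = 2)
  let o : Orientation ℝ E (Fin 2) := (finBasisOfFinrankEq ℝ E Fact.out).orientation
  obtain ⟨z, hz⟩ := exists_ne (0 : E)
  obtain ⟨a, ha, hpos⟩ := hD.exists_inner_pos hz
  have ha0 : a ≠ 0 := by
    rintro rfl
    simp at hpos
  obtain ⟨b, hb, hab⟩ := hD.exists_areaForm_pos (o := o) ha0
  obtain ⟨c, hc, hac⟩ := hD.exists_areaForm_pos (o := o) (neg_ne_zero.2 ha0)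
  rw [map_neg, LinearMap.neg_apply] at hac
  refine Finset.two_lt_card_iff.2 ⟨a, b, c, ha, hb, hc, ?_, ?_, ?_⟩
  · rintro rfl
    simp at hab
  · rintro rfl
    simp at hac
  · rintro rfl
    linarith

lemma exists_superset_forall_pins {D₀ V : Finset E} (hD : PositivelySpans D₀) (hV : 2 ≤ V.card)
    (hext : ∀ v ∈ V, v ∈ extremePoints ℝ (convexHull ℝ (V : Set E))) :
    ∃ D : Finset E, D₀ ⊆ D ∧ D.card + 3 ≤ D₀.card + 3 * V.card ∧
      ∀ v ∈ V, Pins D (convexHull ℝ (V : Set E)) v := by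
  classical
  let o : Orientation ℝ E (Fin 2) := (finBasisOfFinrankEq ℝ E Fact.out).orientation
  choose! T hT hpins using fun v hv =>
    exists_pins_card_add_numReused_le (o := o) (D₀ := D₀) (hext v hv)
  refine ⟨D₀ ∪ V.biUnion T, Finset.subset_union_left, ?_, fun v hv =>
    (hpins v hv).mono (Finset.union_subset_union_right (Finset.subset_biUnion_of_mem T hv))⟩
  calc (D₀ ∪ V.biUnion T).card + 3
      ≤ D₀.card + ∑ v ∈ V, (T v).card + ∑ v ∈ V, numReused o D₀ (convexHull ℝ (V : Set E)) v := by
        gcongr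
        · exact (Finset.card_union_le _ _).trans (Nat.add_le_add_left Finset.card_biUnion_le _)
        · exact three_le_sum_numReused hD hV
    _ = D₀.card + ∑ v ∈ V, ((T v).card + numReused o D₀ (convexHull ℝ (V : Set E)) v) := by
        rw [Finset.sum_add_distrib, add_assoc]
    _ ≤ D₀.card + ∑ _v ∈ V, 3 := by
        gcongr with v hv
        exact hT v hv
    _ = D₀.card + 3 * V.card := by rw [Finset.sum_const, smul_eq_mul, mul_comm]

end Plane

/-- if `D₀` is a set of `m` directions positively spanning `ℝ²`, then a
polytope `X ⊆ ℝ²` with exactly `n_v` vertices is determined by a set of directions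
containing `D₀` of cardinality at most `3 n_v + (m - 3)`, within the class of
polytopes with exactly `n_v` vertices. -/
theorem stmt_6 (m : ℕ) (D₀ : Finset (EuclideanSpace ℝ (Fin 2))) (hm : D₀.card = m)
    (hspan : ∀ x : EuclideanSpace ℝ (Fin 2), ∃ c : EuclideanSpace ℝ (Fin 2) → ℝ,
      (∀ d, 0 ≤ c d) ∧ x = ∑ d ∈ D₀, c d • d)
    (n_v : ℕ) (X : Set (EuclideanSpace ℝ (Fin 2))) (hX : IsPolytope X)
    (hcard : (Set.extremePoints ℝ X).ncard = n_v) :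
    ∃ D : Finset (EuclideanSpace ℝ (Fin 2)), D₀ ⊆ D ∧ D.card ≤ 3 * n_v + (m - 3) ∧
      Determines {Y | IsPolytope Y ∧ (Set.extremePoints ℝ Y).ncard = n_v} D X := by
  have : Fact (finrank ℝ (EuclideanSpace ℝ (Fin 2)) = 2) := ⟨finrank_euclideanSpace_fin⟩
  subst hm hcard
  have hD : PositivelySpans D₀ := hspan
  set V := hX.finite_extremePoints.toFinset
  have hV : (V : Set _) = extremePoints ℝ X := hX.finite_extremePoints.coe_toFinset
  have hVcard : (extremePoints ℝ X).ncard = V.card := by rw [← hV, ncard_coe_finset]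
  have hV1 : 1 ≤ V.card := Finset.card_pos.2 (by
    rw [← Finset.coe_nonempty, hV]
    exact hX.isCompact.extremePoints_nonempty hX.nonempty)
  rcases hV1.eq_or_lt with h1 | h2
  · refine ⟨D₀, subset_rfl, by omega, ?_⟩
    rw [hVcard, ← h1]
    exact hD.determines_of_ncard_extremePoints_eq_one hX (hVcard.trans h1.symm)
  · have hXV : convexHull ℝ (V : Set _) = X := by rw [hV, hX.convexHull_extremePoints]
    obtain ⟨D, hD₀D, hDcard, hpins⟩ := exists_superset_forall_pins hD h2 fun v hv => by
      rw [hXV, ← hV]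
      exact hv
    have := hD.three_le_card
    refine ⟨D, hD₀D, by omega, determines_of_forall_pins hX fun v hv => ?_⟩
    rw [← hXV]
    exact hpins v (by rwa [← Finset.mem_coe, hV])
end

section
/- Let n ≥ 2 and let X ⊆ ℝⁿ be a polytope with exactly 2 vertices (extreme points). Then there exists a finite set D ⊆ ℝⁿ of directions with |D| ≤ 5n - 3 such that D determines X within the class of all polytopes in ℝⁿ having at most 3 extreme points. (Convergence of Algorithm 3 in the case n_v = 2 with known bound n̄ = 3: it terminates after at most 5n - 3 oracle calls with X_v = S_v.) -/
/-!
A polytope with two vertices is, by Krein–Milman, a segment `[a, b]`. Take `u = b - a`, a basis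
of `uᗮ`, and the negatives of these `n` vectors. If a compact set `Y` has the same support values
as `[a, b]` in these `2n ≤ 5n - 3` directions, the basis directions confine `Y` to the line through
`a` and `b` and `±u` confine it to `[a, b]`; the maximisers of `⟪·, u⟫` and `⟪·, -u⟫` on `Y`
are then forced to be `b` and `a`, so a convex `Y` contains `[a, b]`.
-/

open RealInnerProductSpace

open Set Pointwise

section

variable {n : ℕ}

namespace IsPolytope

variable {X : Set (EuclideanSpace ℝ (Fin n))}

theorem isCompact_s12 (hX : IsPolytope X) : IsCompact X := by
  obtain ⟨F, -, rfl⟩ := hX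
  exact F.finite_toSet.isCompact_convexHull ℝ

theorem convex (hX : IsPolytope X) : Convex ℝ X := by
  obtain ⟨F, -, rfl⟩ := hX
  exact convex_convexHull ℝ _

theorem nonempty_s12 (hX : IsPolytope X) : X.Nonempty := by
  obtain ⟨F, hF, rfl⟩ := hX
  exact (Finset.coe_nonempty.mpr hF).convexHull

theorem exists_eq_segment (hX : IsPolytope X) (hcard : (X.extremePoints ℝ).ncard = 2) :
    ∃ a b, a ≠ b ∧ X = segment ℝ a b := by
  obtain ⟨a, b, hab, hE⟩ := ncard_eq_two.mp hcard
  refine ⟨a, b, hab, ?_⟩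
  have hclosed : IsClosed (convexHull ℝ (X.extremePoints ℝ)) := by
    rw [hE]
    exact (toFinite _).isClosed_convexHull ℝ
  rw [← closure_convexHull_extremePoints hX.isCompact_s12 hX.convex, hclosed.closure_eq, hE,
    convexHull_pair]

end IsPolytope

theorem inner_le_supp {Y : Set (EuclideanSpace ℝ (Fin n))} (hY : IsCompact Y) {y} (hy : y ∈ Y)
    (d : EuclideanSpace ℝ (Fin n)) : ⟪y, d⟫ ≤ supp Y d :=
  le_csSup (hY.image (continuous_id.inner continuous_const)).bddAbove ⟨y, hy, rfl⟩

theorem IsCompact.exists_inner_eq_supp {Y : Set (EuclideanSpace ℝ (Fin n))} (hY : IsCompact Y)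
    (hne : Y.Nonempty) (d : EuclideanSpace ℝ (Fin n)) : ∃ y ∈ Y, ⟪y, d⟫ = supp Y d := by
  obtain ⟨y, hy, hmax⟩ := hY.exists_isMaxOn (f := fun v => ⟪v, d⟫) hne
    (continuous_id.inner continuous_const).continuousOn
  refine ⟨y, hy, le_antisymm (inner_le_supp hY hy d) (csSup_le (hne.image _) ?_)⟩
  rintro r ⟨z, hz, rfl⟩
  exact hmax hz

theorem supp_segment (a b d : EuclideanSpace ℝ (Fin n)) :
    supp (segment ℝ a b) d = max ⟪a, d⟫ ⟪b, d⟫ := by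
  have himage : (fun v => ⟪v, d⟫) '' segment ℝ a b = uIcc ⟪a, d⟫ ⟪b, d⟫ := by
    rw [← segment_eq_uIcc]
    exact image_segment ℝ ((innerₛₗ ℝ).flip d).toAffineMap a b
  rw [supp, himage, uIcc, csSup_Icc min_le_max]

theorem mem_span_singleton_of_inner_finBasis_eq_zero {u v : EuclideanSpace ℝ (Fin n)}
    (h : ∀ i, ⟪(Module.finBasis ℝ (ℝ ∙ u)ᗮ i : EuclideanSpace ℝ (Fin n)), v⟫ = 0) :
    v ∈ ℝ ∙ u := by
  set K := (ℝ ∙ u)ᗮ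
  set e := Module.finBasis ℝ K
  have hφ : ((innerₛₗ ℝ).flip v).comp K.subtype = 0 := e.ext fun i => by simpa using h i
  rw [← Submodule.orthogonal_orthogonal (ℝ ∙ u), Submodule.mem_orthogonal]
  intro k hk
  exact LinearMap.congr_fun hφ ⟨k, hk⟩

noncomputable def alignedFrame (u : EuclideanSpace ℝ (Fin n)) :
    Finset (EuclideanSpace ℝ (Fin n)) :=
  insert u (Finset.univ.image fun i => (Module.finBasis ℝ (ℝ ∙ u)ᗮ i : EuclideanSpace ℝ (Fin n)))

theorem card_alignedFrame_le {u : EuclideanSpace ℝ (Fin n)} (hu : u ≠ 0) :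
    (alignedFrame u).card ≤ n := by
  have hrank := Submodule.finrank_add_finrank_orthogonal (ℝ ∙ u)
  rw [finrank_euclideanSpace_fin, finrank_span_singleton hu] at hrank
  calc (alignedFrame u).card ≤ (Finset.univ.image fun i =>
        (Module.finBasis ℝ (ℝ ∙ u)ᗮ i : EuclideanSpace ℝ (Fin n))).card + 1 :=
        Finset.card_insert_le _ _
    _ ≤ Module.finrank ℝ (ℝ ∙ u)ᗮ + 1 := by
        gcongr
        exact Finset.card_image_le.trans (by simp)
    _ = n := by omega

theorem mem_segment_of_inner_mem_uIcc {a b y : EuclideanSpace ℝ (Fin n)} (hab : a ≠ b)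
    (h : ∀ d ∈ alignedFrame (b - a), ⟪y, d⟫ ∈ uIcc ⟪a, d⟫ ⟪b, d⟫) : y ∈ segment ℝ a b := by
  set u := b - a
  have hline : y - a ∈ ℝ ∙ u := by
    refine mem_span_singleton_of_inner_finBasis_eq_zero fun i => ?_
    set w := (Module.finBasis ℝ (ℝ ∙ u)ᗮ i : EuclideanSpace ℝ (Fin n))
    have hwu : ⟪u, w⟫ = 0 := Submodule.inner_right_of_mem_orthogonal
      (Submodule.mem_span_singleton_self u) (Module.finBasis ℝ (ℝ ∙ u)ᗮ i).2
    have hab_w : ⟪b, w⟫ = ⟪a, w⟫ := by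
      rw [← sub_eq_zero, ← inner_sub_left]
      exact hwu
    have hy := h w (Finset.mem_insert_of_mem (Finset.mem_image_of_mem _ (Finset.mem_univ i)))
    rw [hab_w, uIcc_self, mem_singleton_iff] at hy
    rw [real_inner_comm, inner_sub_left, hy, sub_self]
  obtain ⟨t, ht⟩ := Submodule.mem_span_singleton.mp hline
  have huu : 0 < ⟪u, u⟫ := real_inner_self_pos.mpr (sub_ne_zero.mpr hab.symm)
  have hyu := h u (Finset.mem_insert_self _ _)
  have hb : ⟪b, u⟫ = ⟪a, u⟫ + ⟪u, u⟫ := by rw [← inner_add_left, add_sub_cancel]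
  have hy : ⟪y, u⟫ = ⟪a, u⟫ + t * ⟪u, u⟫ := by
    rw [← real_inner_smul_left, ← inner_add_left, ht, add_sub_cancel]
  rw [hb, hy, uIcc_of_le (by linarith), mem_Icc] at hyu
  rw [segment_eq_image']
  refine ⟨t, ⟨?_, ?_⟩, show a + t • u = y by rw [ht, add_sub_cancel]⟩ <;> nlinarith

theorem inner_add_smul_sub (a b d : EuclideanSpace ℝ (Fin n)) (t : ℝ) :
    ⟪a + t • (b - a), d⟫ = ⟪a, d⟫ + t * ⟪b - a, d⟫ := by
  rw [inner_add_left, real_inner_smul_left]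

theorem right_mem_of_supp_eq {a b : EuclideanSpace ℝ (Fin n)} (hab : a ≠ b)
    {Y : Set (EuclideanSpace ℝ (Fin n))} (hY : IsCompact Y) (hne : Y.Nonempty)
    (hYab : Y ⊆ segment ℝ a b) (h : supp Y (b - a) = supp (segment ℝ a b) (b - a)) : b ∈ Y := by
  have huu : 0 < ⟪b - a, b - a⟫ := real_inner_self_pos.mpr (sub_ne_zero.mpr hab.symm)
  have hb : ⟪b, b - a⟫ = ⟪a, b - a⟫ + ⟪b - a, b - a⟫ := by
    rw [← inner_add_left, add_sub_cancel]
  obtain ⟨y, hy, hmax⟩ := hY.exists_inner_eq_supp hne (b - a)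
  rw [h, supp_segment, max_eq_right (by linarith)] at hmax
  obtain ⟨t, -, rfl⟩ := (segment_eq_image' ℝ a b ▸ hYab hy :)
  rw [inner_add_smul_sub, hb] at hmax
  have ht : t = 1 := by nlinarith
  simpa [ht] using hy

noncomputable def segmentDirections (a b : EuclideanSpace ℝ (Fin n)) :
    Finset (EuclideanSpace ℝ (Fin n)) :=
  alignedFrame (b - a) ∪ -alignedFrame (b - a)

theorem card_segmentDirections_le {a b : EuclideanSpace ℝ (Fin n)} (hab : a ≠ b) :
    (segmentDirections a b).card ≤ 2 * n := by
  have := card_alignedFrame_le (sub_ne_zero.mpr hab.symm)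
  calc (segmentDirections a b).card ≤ (alignedFrame (b - a)).card + (-alignedFrame (b - a)).card :=
        Finset.card_union_le _ _
    _ ≤ 2 * n := by rw [Finset.card_neg]; omega

theorem eq_segment_of_supp_eq {a b : EuclideanSpace ℝ (Fin n)} (hab : a ≠ b)
    {Y : Set (EuclideanSpace ℝ (Fin n))} (hY : IsCompact Y) (hconv : Convex ℝ Y)
    (hne : Y.Nonempty) (h : ∀ d ∈ segmentDirections a b, supp Y d = supp (segment ℝ a b) d) :
    Y = segment ℝ a b := by
  have hmem {d} (hd : d ∈ alignedFrame (b - a)) : d ∈ segmentDirections a b :=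
    Finset.mem_union_left _ hd
  have hmem_neg {d} (hd : d ∈ alignedFrame (b - a)) : -d ∈ segmentDirections a b :=
    Finset.mem_union_right _ (Finset.neg_mem_neg hd)
  have hsub : Y ⊆ segment ℝ a b := fun y hy => mem_segment_of_inner_mem_uIcc hab fun d hd => by
    have hle := inner_le_supp hY hy d
    have hge := inner_le_supp hY hy (-d)
    rw [h d (hmem hd), supp_segment] at hle
    rw [h (-d) (hmem_neg hd), supp_segment, inner_neg_right, inner_neg_right, inner_neg_right,
      max_neg_neg, neg_le_neg_iff] at hge
    exact ⟨hge, hle⟩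
  have hu : b - a ∈ alignedFrame (b - a) := Finset.mem_insert_self _ _
  have hb := right_mem_of_supp_eq hab hY hne hsub (h _ (hmem hu))
  have ha : a ∈ Y := by
    refine right_mem_of_supp_eq hab.symm hY hne (segment_symm ℝ a b ▸ hsub) ?_
    rw [segment_symm, ← neg_sub]
    exact h _ (hmem_neg hu)
  exact hsub.antisymm (hconv.segment_subset ha hb)

end

theorem stmt_12_general (n : ℕ) (X : Set (EuclideanSpace ℝ (Fin n)))
    (hX : IsPolytope X) (hcard : (Set.extremePoints ℝ X).ncard = 2) :
    ∃ D : Finset (EuclideanSpace ℝ (Fin n)), D.card ≤ 5 * n - 3 ∧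
      Determines {Y | IsPolytope Y ∧ (Set.extremePoints ℝ Y).ncard ≤ 3} D X := by
  obtain ⟨a, b, hab, rfl⟩ := hX.exists_eq_segment hcard
  have hn : n ≠ 0 := by
    rintro rfl
    exact hab (Subsingleton.elim a b)
  refine ⟨segmentDirections a b, (card_segmentDirections_le hab).trans (by omega), ?_⟩
  rintro Y ⟨hY, -⟩ hsupp
  exact eq_segment_of_supp_eq hab hY.isCompact_s12 hY.convex hY.nonempty_s12 hsupp

/-- a polytope `X ⊆ ℝⁿ` (`n ≥ 2`) with exactly `2` vertices is
determined by at most `5n - 3` directions within the class of polytopes in `ℝⁿ`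
with at most `3` extreme points. -/
theorem stmt_12 (n : ℕ) (hn : 2 ≤ n) (X : Set (EuclideanSpace ℝ (Fin n)))
    (hX : IsPolytope X) (hcard : (Set.extremePoints ℝ X).ncard = 2) :
    ∃ D : Finset (EuclideanSpace ℝ (Fin n)), D.card ≤ 5 * n - 3 ∧
      Determines {Y | IsPolytope Y ∧ (Set.extremePoints ℝ Y).ncard ≤ 3} D X :=
  stmt_12_general n X hX hcard
end
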